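/- Let n ≥ 1. As operators on ℤ₂[ξ₁,…,ξₙ], the dyadic Adem expansion A₃ holds: for every f ∈ ℤ₂[ξ₁,…,ξₙ], 3·Jq³(f) − 6·Jq²(Jq¹(f)) + 3·Jq¹(Jq²(f)) + Jq¹(Jq¹(Jq¹(f))) = 0. -/

import Mathlib

/-!
Write `D_m = ∑ ξᵢ^m ∂/∂ξᵢ`. The Cartan formula `Jq^k(fg) = ∑_{i+j=k} Jq^i f · Jq^j g` makes
`Jq¹ = D₂` a derivation, and it makes the defects `2Jq² − D₂² + 2D₃` and
`6Jq³ − D₂³ + 6D₃D₂ − 6D₄` satisfy the Leibniz rule as well; since they vanish on the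
generators, they vanish. Substituting these expressions, twice the Adem expression becomes
`6(D₄ − [D₂, D₃])`, which is zero by the Witt algebra relation
`[D_{a+1}, D_{b+1}] = (b − a) D_{a+b+1}`. Over a torsion-free ring the factor 2 cancels.
-/

open MvPolynomial

/-- Total dyadic Steenrod square with a formal variable `t` recording the degree shift:
`ξᵢ ↦ ξᵢ + ξᵢ²·t`.  For a homogeneous `f` of degree `d`, the coefficient of `t^k`
is exactly the homogeneous component of degree `d + k` of the image of `f` under the
algebra endomorphism `ξᵢ ↦ ξᵢ + ξᵢ²`. -/
noncomputable def JqT (R : Type) [CommRing R] (n : ℕ) :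
    MvPolynomial (Fin n) R →ₐ[R] Polynomial (MvPolynomial (Fin n) R) :=
  aeval fun i : Fin n => Polynomial.C (X i) + Polynomial.C (X i ^ 2) * Polynomial.X

/-- The `k`-th (dyadic, for `R = ℤ_[2]`) Steenrod square `Jq^k`, as an `R`-linear
endomorphism of `R[ξ₁,…,ξₙ]`: it sends a homogeneous polynomial of degree `d` to the
homogeneous component of degree `d + k` of its image under the algebra endomorphism
`ξᵢ ↦ ξᵢ + ξᵢ²`. -/
noncomputable def Jq (R : Type) [CommRing R] (n : ℕ) (k : ℕ) :
    MvPolynomial (Fin n) R →ₗ[R] MvPolynomial (Fin n) R :=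
  (LinearMap.restrictScalars R (Polynomial.lcoeff (MvPolynomial (Fin n) R) k)).comp
    (JqT R n).toLinearMap

namespace MvPolynomial

variable (R : Type) [CommRing R] (σ : Type)

noncomputable def powDerivation (m : ℕ) : Derivation R (MvPolynomial σ R) (MvPolynomial σ R) :=
  mkDerivation R fun i : σ => X i ^ m

variable {R σ}

theorem powDerivation_X (m : ℕ) (i : σ) : powDerivation R σ m (X i) = X i ^ m :=
  mkDerivation_X R _ i

theorem powDerivation_lie (a b : ℕ) :
    ⁅powDerivation R σ (a + 1), powDerivation R σ (b + 1)⁆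
      = ((b : R) - a) • powDerivation R σ (a + b + 1) := by
  refine derivation_ext fun i => ?_
  simp only [Derivation.commutator_apply, powDerivation_X, Derivation.leibniz_pow,
    add_tsub_cancel_right, smul_eq_mul, nsmul_eq_mul, Nat.cast_add, Nat.cast_one,
    Derivation.coe_smul, Pi.smul_apply, smul_eq_C_mul, C_sub, map_natCast]
  ring

theorem linearMap_eq_zero_of_leibniz {L : MvPolynomial σ R →ₗ[R] MvPolynomial σ R}
    (hL : ∀ f g, L (f * g) = L f * g + f * L g) (hX : ∀ i, L (X i) = 0) : L = 0 := by
  let D : Derivation R (MvPolynomial σ R) (MvPolynomial σ R) :=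
    Derivation.mk' L fun f g => by rw [hL, smul_eq_mul, smul_eq_mul]; ring
  have hD : D = 0 := derivation_ext hX
  exact congrArg Derivation.toLinearMap hD

end MvPolynomial

section Cartan

open Finset

variable {R : Type} [CommRing R] {n : ℕ}

theorem Jq_apply (k : ℕ) (f : MvPolynomial (Fin n) R) : Jq R n k f = (JqT R n f).coeff k := rfl

theorem Jq_zero_apply (f : MvPolynomial (Fin n) R) : Jq R n 0 f = f := by
  induction f using MvPolynomial.induction_on with
  | C a => simp [Jq_apply, JqT, Polynomial.coeff_C]
  | add p q hp hq => rw [map_add, hp, hq]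
  | mul_X p i hp =>
    rw [Jq_apply, map_mul, Polynomial.mul_coeff_zero, ← Jq_apply, hp]
    simp [JqT]

theorem Jq_mul (k : ℕ) (f g : MvPolynomial (Fin n) R) :
    Jq R n k (f * g) = ∑ p ∈ antidiagonal k, Jq R n p.1 f * Jq R n p.2 g := by
  simp only [Jq_apply, map_mul, Polynomial.coeff_mul]

theorem Jq_one_mul (f g : MvPolynomial (Fin n) R) :
    Jq R n 1 (f * g) = Jq R n 1 f * g + f * Jq R n 1 g := by
  simp only [Jq_mul, Nat.sum_antidiagonal_succ, HasAntidiagonal.antidiagonal_zero, sum_singleton,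
    Jq_zero_apply, zero_add]
  ring

theorem Jq_two_mul (f g : MvPolynomial (Fin n) R) :
    Jq R n 2 (f * g) = Jq R n 2 f * g + Jq R n 1 f * Jq R n 1 g + f * Jq R n 2 g := by
  simp only [Jq_mul, Nat.sum_antidiagonal_succ, HasAntidiagonal.antidiagonal_zero, sum_singleton,
    Jq_zero_apply, zero_add, Nat.reduceAdd]
  ring

theorem Jq_three_mul (f g : MvPolynomial (Fin n) R) :
    Jq R n 3 (f * g) = Jq R n 3 f * g + Jq R n 2 f * Jq R n 1 g
      + Jq R n 1 f * Jq R n 2 g + f * Jq R n 3 g := by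
  simp only [Jq_mul, Nat.sum_antidiagonal_succ, HasAntidiagonal.antidiagonal_zero, sum_singleton,
    Jq_zero_apply, zero_add, Nat.reduceAdd]
  ring

theorem Jq_X (k : ℕ) (i : Fin n) :
    Jq R n k (X i) = (Polynomial.C (X i) + Polynomial.C (X i ^ 2) * Polynomial.X).coeff k := by
  rw [Jq_apply, JqT, aeval_X]

theorem Jq_one_X (i : Fin n) : Jq R n 1 (X i) = X i ^ 2 := by
  rw [Jq_X, Polynomial.coeff_add, Polynomial.coeff_C_mul_X, Polynomial.coeff_C]
  simp

theorem Jq_X_of_two_le {k : ℕ} (hk : 2 ≤ k) (i : Fin n) : Jq R n k (X i) = 0 := by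
  rw [Jq_X, Polynomial.coeff_add, Polynomial.coeff_C_mul_X, Polynomial.coeff_C,
    if_neg (by omega), if_neg (by omega), add_zero]

end Cartan

section Adem

variable {R : Type} [CommRing R] {n : ℕ}

local notation "𝔡" => powDerivation R (Fin n)

theorem Jq_one_apply (f : MvPolynomial (Fin n) R) : Jq R n 1 f = 𝔡 2 f := by
  have h : Jq R n 1 - (𝔡 2).toLinearMap = 0 := by
    refine linearMap_eq_zero_of_leibniz (fun f g => ?_) (fun i => ?_)
    · simp only [LinearMap.sub_apply, Derivation.coeFn_coe, Jq_one_mul, Derivation.leibniz,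
        smul_eq_mul]
      ring
    · simp [Jq_one_X, powDerivation_X]
  exact sub_eq_zero.mp (LinearMap.congr_fun h f)

theorem two_nsmul_Jq_two_apply (f : MvPolynomial (Fin n) R) :
    2 • Jq R n 2 f = 𝔡 2 (𝔡 2 f) - 2 • 𝔡 3 f := by
  have h : 2 • Jq R n 2 - (𝔡 2).toLinearMap ∘ₗ (𝔡 2).toLinearMap + 2 • (𝔡 3).toLinearMap = 0 := by
    refine linearMap_eq_zero_of_leibniz (fun f g => ?_) (fun i => ?_)
    · simp only [LinearMap.add_apply, LinearMap.sub_apply, LinearMap.smul_apply,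
        LinearMap.comp_apply, Derivation.coeFn_coe, Jq_two_mul, Jq_one_apply,
        Derivation.leibniz, smul_eq_mul, map_add]
      ring
    · simp only [LinearMap.add_apply, LinearMap.sub_apply, LinearMap.smul_apply,
        LinearMap.comp_apply, Derivation.coeFn_coe, Jq_X_of_two_le le_rfl,
        powDerivation_X, Derivation.leibniz_pow, smul_eq_mul]
      ring
  have hf := LinearMap.congr_fun h f
  simp only [LinearMap.add_apply, LinearMap.sub_apply, LinearMap.smul_apply,
    LinearMap.comp_apply, LinearMap.zero_apply, Derivation.coeFn_coe] at hf
  linear_combination hf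

theorem six_nsmul_Jq_three_apply (f : MvPolynomial (Fin n) R) :
    6 • Jq R n 3 f = 𝔡 2 (𝔡 2 (𝔡 2 f)) - 6 • 𝔡 3 (𝔡 2 f) + 6 • 𝔡 4 f := by
  have h : 6 • Jq R n 3 - (𝔡 2).toLinearMap ∘ₗ (𝔡 2).toLinearMap ∘ₗ (𝔡 2).toLinearMap
      + 6 • (𝔡 3).toLinearMap ∘ₗ (𝔡 2).toLinearMap - 6 • (𝔡 4).toLinearMap = 0 := by
    refine linearMap_eq_zero_of_leibniz (fun f g => ?_) (fun i => ?_)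
    · simp only [LinearMap.add_apply, LinearMap.sub_apply, LinearMap.smul_apply,
        LinearMap.comp_apply, Derivation.coeFn_coe, Jq_three_mul, Jq_one_apply,
        Derivation.leibniz, smul_eq_mul, map_add]
      linear_combination (3 * 𝔡 2 g) * two_nsmul_Jq_two_apply f
        + (3 * 𝔡 2 f) * two_nsmul_Jq_two_apply g
    · simp only [LinearMap.add_apply, LinearMap.sub_apply, LinearMap.smul_apply,
        LinearMap.comp_apply, Derivation.coeFn_coe, Jq_X_of_two_le (by norm_num : 2 ≤ 3),
        powDerivation_X, Derivation.leibniz_pow, smul_eq_mul, map_nsmul, Derivation.leibniz]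
      ring
  have hf := LinearMap.congr_fun h f
  simp only [LinearMap.add_apply, LinearMap.sub_apply, LinearMap.smul_apply,
    LinearMap.comp_apply, LinearMap.zero_apply, Derivation.coeFn_coe] at hf
  linear_combination hf

theorem Jq_adem_A3 [IsDomain R] [CharZero R] (f : MvPolynomial (Fin n) R) :
    (3 : R) • Jq R n 3 f - (6 : R) • Jq R n 2 (Jq R n 1 f) + (3 : R) • Jq R n 1 (Jq R n 2 f)
      + Jq R n 1 (Jq R n 1 (Jq R n 1 f)) = 0 := by
  have hlie : 𝔡 2 (𝔡 3 f) - 𝔡 3 (𝔡 2 f) = 𝔡 4 f := by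
    have h := congr($(powDerivation_lie (R := R) (σ := Fin n) 1 2) f)
    norm_num [Derivation.commutator_apply] at h
    exact h
  have h₂ := congr(𝔡 2 $(two_nsmul_Jq_two_apply f))
  have h₂' := two_nsmul_Jq_two_apply (𝔡 2 f)
  have h₃ := six_nsmul_Jq_three_apply f
  simp only [map_sub, map_nsmul] at h₂
  apply nsmul_right_injective two_ne_zero
  simp only [ofNat_smul_eq_nsmul, Jq_one_apply]
  linear_combination h₃ - 6 • h₂' + 3 • h₂ - 6 • hlie

end Adem

theorem adem_expansion_A3_general (n : ℕ) (f : MvPolynomial (Fin n) ℤ_[2]) :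
    (3 : ℤ_[2]) • Jq ℤ_[2] n 3 f - (6 : ℤ_[2]) • Jq ℤ_[2] n 2 (Jq ℤ_[2] n 1 f)
      + (3 : ℤ_[2]) • Jq ℤ_[2] n 1 (Jq ℤ_[2] n 2 f)
      + Jq ℤ_[2] n 1 (Jq ℤ_[2] n 1 (Jq ℤ_[2] n 1 f)) = 0 :=
  Jq_adem_A3 f

/-- The dyadic Adem expansion `A₃ = 3·Jq³ − 6·Jq²Jq¹ + 3·Jq¹Jq² + Jq¹Jq¹Jq¹ = 0`. -/
theorem adem_expansion_A3 (n : ℕ) (hn : 1 ≤ n) (f : MvPolynomial (Fin n) ℤ_[2]) :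
    (3 : ℤ_[2]) • Jq ℤ_[2] n 3 f - (6 : ℤ_[2]) • Jq ℤ_[2] n 2 (Jq ℤ_[2] n 1 f)
      + (3 : ℤ_[2]) • Jq ℤ_[2] n 1 (Jq ℤ_[2] n 2 f)
      + Jq ℤ_[2] n 1 (Jq ℤ_[2] n 1 (Jq ℤ_[2] n 1 f)) = 0 :=
  adem_expansion_A3_general n f
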